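/- Define φ₁(p) = sin²p / p² + π²(2p − sin 2p)² / (4p⁴) − 1 for p ≠ 0. Then φ₁(p) > 0 for all p with 0 < |p| < π, and φ₁(π) = φ₁(−π) = 0. (Geometrically: the half-ellipse r² + 16π²z² = 1, r ≥ 0, lies inside the curve r = sin p / p, z = (2p − sin 2p)/(8p²), p ∈ [−π, π], which is the profile of the unit sub-Riemannian sphere of the Heisenberg group, meeting it only at (r,z) = (1,0) and (0, ±1/(4π)).) -/
import Mathlib


open Real

private lemma mono_Ici {f f' : ℝ → ℝ} (hd : ∀ y, HasDerivAt f (f' y) y)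
    (h0 : ∀ y, 0 ≤ y → 0 ≤ f' y) {x : ℝ} (hx : 0 ≤ x) : f 0 ≤ f x := by
  have mono : MonotoneOn f (Set.Ici 0) :=
    monotoneOn_of_deriv_nonneg (convex_Ici 0)
      (fun y _ => (hd y).continuousAt.continuousWithinAt)
      (fun y _ => (hd y).differentiableAt.differentiableWithinAt)
      (fun y hy => by
        rw [(hd y).deriv]
        exact h0 y (le_of_lt (by rwa [interior_Ici] at hy)))
  exact mono Set.self_mem_Ici hx hx

private lemma sinLB3 {x : ℝ} (hx : 0 ≤ x) : x - x^3/6 ≤ Real.sin x := by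
  have hd : ∀ y : ℝ, HasDerivAt (fun t => Real.sin t - (t - t^3/6))
      (Real.cos y - (1 - (3:ℕ) * y^(3-1) / 6)) y := fun y =>
    (Real.hasDerivAt_sin y).sub ((hasDerivAt_id y).sub ((hasDerivAt_pow 3 y).div_const 6))
  have h := mono_Ici hd (fun y _ => by
    have := Real.one_sub_sq_div_two_le_cos (x := y)
    push_cast; nlinarith) hx
  simp at h
  linarith

private lemma cosUB4 {x : ℝ} (hx : 0 ≤ x) : Real.cos x ≤ 1 - x^2/2 + x^4/24 := by
  have hd : ∀ y : ℝ, HasDerivAt (fun t : ℝ => 1 - t^2/2 + t^4/24 - Real.cos t)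
      (0 - (2:ℕ) * y^(2-1) / 2 + (4:ℕ) * y^(4-1) / 24 - (-Real.sin y)) y := fun y =>
    (((hasDerivAt_const y (1:ℝ)).sub ((hasDerivAt_pow 2 y).div_const 2)).add
      ((hasDerivAt_pow 4 y).div_const 24)).sub (Real.hasDerivAt_cos y)
  have h := mono_Ici hd (fun y hy => by
    have := sinLB3 hy
    push_cast; nlinarith) hx
  simp at h
  linarith

private lemma sinUB5 {x : ℝ} (hx : 0 ≤ x) : Real.sin x ≤ x - x^3/6 + x^5/120 := by
  have hd : ∀ y : ℝ, HasDerivAt (fun t : ℝ => t - t^3/6 + t^5/120 - Real.sin t)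
      (1 - (3:ℕ) * y^(3-1) / 6 + (5:ℕ) * y^(5-1) / 120 - Real.cos y) y := fun y =>
    (((hasDerivAt_id y).sub ((hasDerivAt_pow 3 y).div_const 6)).add
      ((hasDerivAt_pow 5 y).div_const 120)).sub (Real.hasDerivAt_sin y)
  have h := mono_Ici hd (fun y hy => by
    have := cosUB4 hy
    push_cast; nlinarith) hx
  simp at h
  linarith

private lemma cosLB6 {x : ℝ} (hx : 0 ≤ x) :
    1 - x^2/2 + x^4/24 - x^6/720 ≤ Real.cos x := by
  have hd : ∀ y : ℝ, HasDerivAt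
      (fun t : ℝ => Real.cos t - (1 - t^2/2 + t^4/24 - t^6/720))
      (-Real.sin y - (0 - (2:ℕ) * y^(2-1) / 2 + (4:ℕ) * y^(4-1) / 24
        - (6:ℕ) * y^(6-1) / 720)) y := fun y =>
    (Real.hasDerivAt_cos y).sub
      ((((hasDerivAt_const y (1:ℝ)).sub ((hasDerivAt_pow 2 y).div_const 2)).add
        ((hasDerivAt_pow 4 y).div_const 24)).sub ((hasDerivAt_pow 6 y).div_const 720))
  have h := mono_Ici hd (fun y hy => by
    have := sinUB5 hy
    push_cast; nlinarith) hx
  simp at h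
  linarith

private lemma sinLB7 {x : ℝ} (hx : 0 ≤ x) :
    x - x^3/6 + x^5/120 - x^7/5040 ≤ Real.sin x := by
  have hd : ∀ y : ℝ, HasDerivAt
      (fun t : ℝ => Real.sin t - (t - t^3/6 + t^5/120 - t^7/5040))
      (Real.cos y - (1 - (3:ℕ) * y^(3-1) / 6 + (5:ℕ) * y^(5-1) / 120
        - (7:ℕ) * y^(7-1) / 5040)) y := fun y =>
    (Real.hasDerivAt_sin y).sub
      ((((hasDerivAt_id y).sub ((hasDerivAt_pow 3 y).div_const 6)).add
        ((hasDerivAt_pow 5 y).div_const 120)).sub ((hasDerivAt_pow 7 y).div_const 5040))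
  have h := mono_Ici hd (fun y hy => by
    have := cosLB6 hy
    push_cast; nlinarith) hx
  simp at h
  linarith

private lemma cosUB8 {x : ℝ} (hx : 0 ≤ x) :
    Real.cos x ≤ 1 - x^2/2 + x^4/24 - x^6/720 + x^8/40320 := by
  have hd : ∀ y : ℝ, HasDerivAt
      (fun t : ℝ => 1 - t^2/2 + t^4/24 - t^6/720 + t^8/40320 - Real.cos t)
      (0 - (2:ℕ) * y^(2-1) / 2 + (4:ℕ) * y^(4-1) / 24 - (6:ℕ) * y^(6-1) / 720
        + (8:ℕ) * y^(8-1) / 40320 - (-Real.sin y)) y := fun y =>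
    (((((hasDerivAt_const y (1:ℝ)).sub ((hasDerivAt_pow 2 y).div_const 2)).add
      ((hasDerivAt_pow 4 y).div_const 24)).sub ((hasDerivAt_pow 6 y).div_const 720)).add
      ((hasDerivAt_pow 8 y).div_const 40320)).sub (Real.hasDerivAt_cos y)
  have h := mono_Ici hd (fun y hy => by
    have := sinLB7 hy
    push_cast; nlinarith) hx
  simp at h
  linarith

private lemma sinUB9 {x : ℝ} (hx : 0 ≤ x) :
    Real.sin x ≤ x - x^3/6 + x^5/120 - x^7/5040 + x^9/362880 := by
  have hd : ∀ y : ℝ, HasDerivAt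
      (fun t : ℝ => t - t^3/6 + t^5/120 - t^7/5040 + t^9/362880 - Real.sin t)
      (1 - (3:ℕ) * y^(3-1) / 6 + (5:ℕ) * y^(5-1) / 120 - (7:ℕ) * y^(7-1) / 5040
        + (9:ℕ) * y^(9-1) / 362880 - Real.cos y) y := fun y =>
    (((((hasDerivAt_id y).sub ((hasDerivAt_pow 3 y).div_const 6)).add
      ((hasDerivAt_pow 5 y).div_const 120)).sub ((hasDerivAt_pow 7 y).div_const 5040)).add
      ((hasDerivAt_pow 9 y).div_const 362880)).sub (Real.hasDerivAt_sin y)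
  have h := mono_Ici hd (fun y hy => by
    have := cosUB8 hy
    push_cast; nlinarith) hx
  simp at h
  linarith

/-- the key polynomial inequality for the region `0 < p ≤ 11/5`, in `x = p²`. -/
private lemma polyKey {x : ℝ} (h0 : 0 ≤ x) (h1 : x ≤ 121/25) :
    (9869/1000) * (4/3 - 4*x/15 + 8*x^2/315 - 4*x^3/2835)^2
      > 4 * (1/6 - x/120 + x^2/5040) *
        ((1 - x/6 + x^2/120 - x^3/5040) + 1) := by
  nlinarith [sq_nonneg x, sq_nonneg (x-1), sq_nonneg (x-2), sq_nonneg (x-3), sq_nonneg (x-4),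
    sq_nonneg (x^2 - 4*x), sq_nonneg (x^3 - 4*x^2), mul_nonneg h0 h0,
    mul_nonneg (mul_nonneg h0 h0) h0]

private lemma mPos {x : ℝ} (h0 : 0 ≤ x) (h1 : x ≤ 121/25) :
    0 < 4/3 - 4*x/15 + 8*x^2/315 - 4*x^3/2835 := by
  nlinarith [sq_nonneg (x - 2), sq_nonneg x, mul_nonneg h0 h0]

private lemma qPos {x : ℝ} (h0 : 0 ≤ x) (h1 : x ≤ 121/25) :
    0 < 1 - x/6 + x^2/120 - x^3/5040 := by
  nlinarith [sq_nonneg (x - 2), sq_nonneg x, mul_nonneg h0 h0]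

/-- The restriction of `f₁(r,z) = r² + 16π²z² − 1` to the profile curve of the unit
sub-Riemannian sphere of the Heisenberg group. -/
noncomputable def φ₁ (p : ℝ) : ℝ :=
  Real.sin p ^ 2 / p ^ 2 + Real.pi ^ 2 * (2 * p - Real.sin (2 * p)) ^ 2 / (4 * p ^ 4) - 1

private lemma phi_even (p : ℝ) : φ₁ (-p) = φ₁ p := by
  unfold φ₁
  rw [show 2 * (-p) = -(2*p) by ring, Real.sin_neg, Real.sin_neg]
  ring

private lemma sin_z_bound {z : ℝ} (hz0 : 0 ≤ z) (hzl : (0.941592:ℝ) < z)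
    (hzu : z < 0.941593) : Real.sin z ≤ 0.80863 := by
  have hub := sinUB5 hz0
  have hz2u : z^2 < 0.886599 := by nlinarith
  have hz2l : (0.886595:ℝ) < z^2 := by nlinarith
  have hz4u : z^4 < 0.78606 := by nlinarith
  have hfac : 1 - z^2/6 + z^4/120 < 0.858786 := by nlinarith
  have hfac0 : (0:ℝ) < 1 - z^2/6 + z^4/120 := by nlinarith
  have hmul : z * (1 - z^2/6 + z^4/120) < 0.941593 * 0.858786 :=
    mul_lt_mul'' hzu hfac hz0 hfac0.le
  nlinarith

private lemma G_anti :
    StrictAntiOn (fun t : ℝ => Real.pi * (t - Real.sin t * Real.cos t) - t^2)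
      (Set.Icc (11/5) Real.pi) := by
  have hπ1 : (3.141592 : ℝ) < Real.pi := Real.pi_gt_d6
  have hπ2 : Real.pi < 3.141593 := Real.pi_lt_d6
  have hd : ∀ y : ℝ, HasDerivAt (fun t : ℝ => Real.pi * (t - Real.sin t * Real.cos t) - t^2)
      (Real.pi * (1 - (Real.cos y * Real.cos y + Real.sin y * (-Real.sin y)))
        - (2:ℕ) * y^(2-1)) y := fun y =>
    (((hasDerivAt_id y).sub ((Real.hasDerivAt_sin y).mul (Real.hasDerivAt_cos y))).const_mul
      Real.pi).sub (hasDerivAt_pow 2 y)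
  apply strictAntiOn_of_deriv_neg (convex_Icc _ _)
    (fun y _ => (hd y).continuousAt.continuousWithinAt)
  intro y hy
  rw [interior_Icc] at hy
  obtain ⟨hy1, hy2⟩ := hy
  rw [(hd y).deriv]
  have hsy0 : 0 ≤ Real.sin y :=
    Real.sin_nonneg_of_nonneg_of_le_pi (by linarith) hy2.le
  have hmono : Real.sin y ≤ Real.sin (Real.pi - 11/5) := by
    rw [← Real.sin_pi_sub y]
    apply Real.sin_le_sin_of_le_of_le_pi_div_two
    · linarith
    · linarith
    · linarith
  have hsz : Real.sin (Real.pi - 11/5) ≤ 0.80863 :=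
    sin_z_bound (by linarith) (by linarith) (by linarith)
  have hsyy : Real.sin y ≤ 0.80863 := hmono.trans hsz
  have hsy2 : Real.pi * Real.sin y ^ 2 < 11/5 := by nlinarith
  have hcs := Real.sin_sq_add_cos_sq y
  have h21 : ((2:ℕ) : ℝ) * y^(2-1) = 2 * y := by norm_num
  rw [h21]
  nlinarith

private lemma numerator_pos {p : ℝ} (hp0 : 0 < p) (hpπ : p < Real.pi) :
    0 < 4*p^2 * Real.sin p ^ 2 + Real.pi^2 * (2*p - Real.sin (2*p))^2 - 4*p^4 := by
  have hπ1 : (3.141592 : ℝ) < Real.pi := Real.pi_gt_d6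
  have hπ2 : Real.pi < 3.141593 := Real.pi_lt_d6
  rcases le_or_gt p (11/5) with hle | hgt
  · -- small region: Taylor bounds
    have hx0 : (0:ℝ) ≤ p^2 := sq_nonneg p
    have hx1 : p^2 ≤ 121/25 := by nlinarith
    have hq := qPos hx0 hx1
    have hm := mPos hx0 hx1
    have key := polyKey hx0 hx1
    have hQ : p - p^3/6 + p^5/120 - p^7/5040 ≤ Real.sin p := sinLB7 hp0.le
    have hQ0 : 0 ≤ p - p^3/6 + p^5/120 - p^7/5040 := by nlinarith [mul_pos hp0 hq]
    have hM' : p^3 * (4/3 - 4*(p^2)/15 + 8*(p^2)^2/315 - 4*(p^2)^3/2835)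
        ≤ 2*p - Real.sin (2*p) := by
      have h2p : (0:ℝ) ≤ 2*p := by linarith
      have h9 := sinUB9 h2p
      linarith [h9]
    have hM0 : 0 ≤ p^3 * (4/3 - 4*(p^2)/15 + 8*(p^2)^2/315 - 4*(p^2)^3/2835) :=
      le_of_lt (mul_pos (pow_pos hp0 3) hm)
    have hs2 : (p - p^3/6 + p^5/120 - p^7/5040)^2 ≤ Real.sin p ^ 2 :=
      pow_le_pow_left₀ hQ0 hQ 2
    have hm2 : (p^3 * (4/3 - 4*(p^2)/15 + 8*(p^2)^2/315 - 4*(p^2)^3/2835))^2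
        ≤ (2*p - Real.sin (2*p))^2 := pow_le_pow_left₀ hM0 hM' 2
    have hπsq : (9869/1000 : ℝ) < Real.pi ^ 2 := by nlinarith
    -- multiply key by p^6 > 0
    have hp6 : (0:ℝ) < p^6 := by positivity
    have key' := mul_lt_mul_of_pos_left key hp6
    -- assemble
    have hA : 4*p^2 * (p - p^3/6 + p^5/120 - p^7/5040)^2 ≤ 4*p^2 * Real.sin p ^ 2 :=
      mul_le_mul_of_nonneg_left hs2 (by positivity)
    have hB : Real.pi^2 * (p^3 * (4/3 - 4*(p^2)/15 + 8*(p^2)^2/315 - 4*(p^2)^3/2835))^2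
        ≤ Real.pi^2 * (2*p - Real.sin (2*p))^2 :=
      mul_le_mul_of_nonneg_left hm2 (by positivity)
    have hC : (9869/1000) * (p^3 * (4/3 - 4*(p^2)/15 + 8*(p^2)^2/315 - 4*(p^2)^3/2835))^2
        ≤ Real.pi^2 * (p^3 * (4/3 - 4*(p^2)/15 + 8*(p^2)^2/315 - 4*(p^2)^3/2835))^2 :=
      mul_le_mul_of_nonneg_right hπsq.le (sq_nonneg _)
    linarith [hA, hB, hC, key']
  · -- large region: antitonicity of G(p) = pi(p - sin p cos p) - p^2
    have h52 : (11/5 : ℝ) < Real.pi := by linarith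
    have hGπ : Real.pi * (Real.pi - Real.sin Real.pi * Real.cos Real.pi) - Real.pi^2 = 0 := by
      rw [Real.sin_pi]; ring
    have hGp := G_anti (Set.mem_Icc.2 ⟨hgt.le, hpπ.le⟩)
      (Set.mem_Icc.2 ⟨h52.le, le_refl _⟩) hpπ
    simp only at hGp
    rw [hGπ] at hGp
    have hkey : p^2 < Real.pi * (p - Real.sin p * Real.cos p) := by linarith
    have hp2 : (0:ℝ) ≤ p^2 := sq_nonneg p
    have hsq : (p^2)^2 < (Real.pi * (p - Real.sin p * Real.cos p))^2 := by
      nlinarith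
    have heq : Real.pi^2 * (2*p - Real.sin (2*p))^2
        = 4 * (Real.pi * (p - Real.sin p * Real.cos p))^2 := by
      rw [Real.sin_two_mul]; ring
    linarith [sq_nonneg (p * Real.sin p), hsq, heq]

theorem stmt11 :
    (∀ p : ℝ, 0 < |p| → |p| < Real.pi → 0 < φ₁ p) ∧
    φ₁ Real.pi = 0 ∧ φ₁ (-Real.pi) = 0 := by
  have hπ0 : Real.pi ≠ 0 := Real.pi_ne_zero
  have hπpos := Real.pi_pos
  have hpos : ∀ p : ℝ, 0 < p → p < Real.pi → 0 < φ₁ p := by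
    intro p hp0 hpπ
    have hnum := numerator_pos hp0 hpπ
    have hp4 : (0:ℝ) < 4 * p^4 := by positivity
    have hrepr : φ₁ p = (4*p^2 * Real.sin p ^ 2 + Real.pi^2 * (2*p - Real.sin (2*p))^2
        - 4*p^4) / (4*p^4) := by
      unfold φ₁
      field_simp
    rw [hrepr]
    exact div_pos hnum hp4
  have hπ : φ₁ Real.pi = 0 := by
    unfold φ₁
    rw [Real.sin_pi, show (2:ℝ) * Real.pi = 2 * Real.pi from rfl]
    rw [Real.sin_two_pi]
    field_simp
    ring
  refine ⟨?_, hπ, by rw [phi_even]; exact hπ⟩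
  intro p hp0 hpπ
  rcases abs_cases p with ⟨h, hs⟩ | ⟨h, hs⟩
  · rw [h] at hp0 hpπ; exact hpos p hp0 hpπ
  · rw [h] at hp0 hpπ
    rw [← neg_neg p, phi_even]
    exact hpos (-p) hp0 hpπ
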